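/- Monotonicity of the minimal interpolation degree: If S' ⊆ S are finite sets of points in ℝ^s, then μ(S') ≤ μ(S). -/

import Mathlib

open Finset
open scoped Classical

noncomputable section

/-- `L` is an interpolation space with respect to `S ⊆ ℝ^s`. -/
def IsInterpSpace {s : ℕ} (S : Set (Fin s → ℝ)) (L : Submodule ℝ (MvPolynomial (Fin s) ℝ)) :
    Prop :=
  ∀ f : MvPolynomial (Fin s) ℝ, ∃! g : MvPolynomial (Fin s) ℝ,
    g ∈ L ∧ ∀ z ∈ S, MvPolynomial.eval z g = MvPolynomial.eval z f

/-- `L` is a minimal degree interpolation space with respect to `S ⊆ ℝ^s`. -/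
def IsMinDegInterpSpace {s : ℕ} (S : Set (Fin s → ℝ))
    (L : Submodule ℝ (MvPolynomial (Fin s) ℝ)) : Prop :=
  IsInterpSpace S L ∧
    ∀ f g : MvPolynomial (Fin s) ℝ, g ∈ L →
      (∀ z ∈ S, MvPolynomial.eval z g = MvPolynomial.eval z f) →
      g.totalDegree ≤ f.totalDegree

/-- The maximal total degree occurring in a space of polynomials. -/
def degSup {s : ℕ} (L : Submodule ℝ (MvPolynomial (Fin s) ℝ)) : ℕ :=
  sSup (MvPolynomial.totalDegree '' (L : Set (MvPolynomial (Fin s) ℝ)))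

/-- `μ(S)`: the maximal degree of a minimal degree interpolation space with respect to `S`. -/
def mu {s : ℕ} (S : Set (Fin s → ℝ)) : ℕ :=
  sSup (degSup '' {L | IsMinDegInterpSpace S L})

/-!
A minimal degree interpolation space for a finite `S` exists: lift the evaluation map
`p ↦ p|_S` along the degree filtration, at each degree `n` keeping the lift already chosen on
the values of polynomials of degree `< n` and lifting the rest by polynomials of degree `n`.
Products of affine separators interpolate every function on `S` in degree `≤ #S`, which bounds
all the suprema involved. If `L` is such a space for `S` and `g` lies in a minimal degree space
for `S' ⊆ S`, then `g` agrees on `S'` with its interpolant in `L`, so `deg g` is at most the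
degree of that interpolant, hence at most `μ(S)`.
-/

namespace LinearMap

variable {K M Y : Type*} [Field K] [AddCommGroup M] [Module K M] [AddCommGroup Y] [Module K Y]

theorem exists_lift_on_map (E : M →ₗ[K] Y) (W : Submodule K M) :
    ∃ τ : Y →ₗ[K] M, ∀ y ∈ W.map E, τ y ∈ W ∧ E (τ y) = y := by
  obtain ⟨g, hg⟩ := Module.projective_lifting_property (E.submoduleMap W) LinearMap.id
    (E.submoduleMap_surjective W)
  obtain ⟨π, hπ⟩ := (W.map E).subtype.exists_leftInverse_of_injective (W.map E).ker_subtype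
  refine ⟨W.subtype ∘ₗ g ∘ₗ π, fun y hy => ⟨(g (π y)).2, ?_⟩⟩
  have hπy : π y = ⟨y, hy⟩ := LinearMap.congr_fun hπ ⟨y, hy⟩
  have hgy := congrArg Subtype.val (LinearMap.congr_fun hg ⟨y, hy⟩)
  simpa [hπy] using hgy

theorem exists_lift_on_map_of_monotone (E : M →ₗ[K] Y) {V : ℕ → Submodule K M}
    (hV : Monotone V) (n : ℕ) :
    ∃ σ : Y →ₗ[K] M, ∀ m ≤ n, ∀ y ∈ (V m).map E, σ y ∈ V m ∧ E (σ y) = y := by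
  induction n with
  | zero =>
    obtain ⟨τ, hτ⟩ := E.exists_lift_on_map (V 0)
    exact ⟨τ, fun m hm => Nat.le_zero.mp hm ▸ hτ⟩
  | succ n ih =>
    obtain ⟨σ, hσ⟩ := ih
    obtain ⟨τ, hτ⟩ := E.exists_lift_on_map (V (n + 1))
    obtain ⟨π, hπ⟩ := ((V n).map E).subtype.exists_leftInverse_of_injective
      ((V n).map E).ker_subtype
    set P := ((V n).map E).subtype ∘ₗ π
    have hP_mem (y : Y) : P y ∈ (V n).map E := (π y).2
    have hP_fix {y : Y} (hy : y ∈ (V n).map E) : P y = y :=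
      congrArg Subtype.val (LinearMap.congr_fun hπ ⟨y, hy⟩)
    -- `σ` is kept on `(V n).map E`, and `τ` handles the remainder `y - P y`.
    refine ⟨σ ∘ₗ P + τ ∘ₗ (LinearMap.id - P), fun m hm y hy => ?_⟩
    rcases hm.lt_or_eq with hm | rfl
    · have hyn : y ∈ (V n).map E := Submodule.map_mono (hV (Nat.lt_succ_iff.mp hm)) hy
      simpa [hP_fix hyn] using hσ m (Nat.lt_succ_iff.mp hm) y hy
    · have hrest : y - P y ∈ (V (n + 1)).map E :=
        sub_mem hy (Submodule.map_mono (hV n.le_succ) (hP_mem y))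
      obtain ⟨hσV, hσE⟩ := hσ n le_rfl (P y) (hP_mem y)
      obtain ⟨hτV, hτE⟩ := hτ _ hrest
      show σ (P y) + τ (y - P y) ∈ V (n + 1) ∧ E (σ (P y) + τ (y - P y)) = y
      exact ⟨add_mem (hV n.le_succ hσV) hτV, by rw [map_add, hσE, hτE, add_sub_cancel]⟩

theorem exists_lift_of_monotone_of_map_eq_top (E : M →ₗ[K] Y) {V : ℕ → Submodule K M}
    (hV : Monotone V) {N : ℕ} (hN : (V N).map E = ⊤) :
    ∃ σ : Y →ₗ[K] M, (∀ y, E (σ y) = y) ∧ ∀ m, ∀ y ∈ (V m).map E, σ y ∈ V m := by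
  obtain ⟨σ, hσ⟩ := E.exists_lift_on_map_of_monotone hV N
  have htop (y : Y) : y ∈ (V N).map E := hN ▸ Submodule.mem_top
  refine ⟨σ, fun y => (hσ N le_rfl y (htop y)).2, fun m y hy => ?_⟩
  rcases le_total m N with hm | hm
  · exact (hσ m hm y hy).1
  · exact hV hm (hσ N le_rfl y (htop y)).1

end LinearMap

namespace MvPolynomial

variable {s : ℕ}

def evalOn (S : Set (Fin s → ℝ)) : MvPolynomial (Fin s) ℝ →ₗ[ℝ] (S → ℝ) where
  toFun p z := eval (z : Fin s → ℝ) p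
  map_add' p q := by ext; simp
  map_smul' c p := by ext; simp

@[simp]
theorem evalOn_apply (S : Set (Fin s → ℝ)) (p : MvPolynomial (Fin s) ℝ) (z : S) :
    evalOn S p z = eval (z : Fin s → ℝ) p :=
  rfl

theorem evalOn_eq_evalOn_iff {S : Set (Fin s → ℝ)} {f g : MvPolynomial (Fin s) ℝ} :
    evalOn S g = evalOn S f ↔ ∀ z ∈ S, eval z g = eval z f := by
  simp only [_root_.funext_iff, evalOn_apply, Subtype.forall]

theorem restrictTotalDegree_monotone :
    Monotone (restrictTotalDegree (Fin s) ℝ) := fun _ _ hab _ hp =>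
  (mem_restrictTotalDegree _ _ _).2 (((mem_restrictTotalDegree _ _ _).1 hp).trans hab)

theorem exists_totalDegree_le_one_separating (z w : Fin s → ℝ) :
    ∃ q : MvPolynomial (Fin s) ℝ, q.totalDegree ≤ 1 ∧ eval z q = 1 ∧ (w ≠ z → eval w q = 0) := by
  by_cases hwz : w = z
  · exact ⟨1, by simp, by simp, fun h => absurd hwz h⟩
  obtain ⟨i, hi⟩ := Function.ne_iff.mp hwz
  refine ⟨(z i - w i)⁻¹ • (X i - C (w i)), ?_, ?_, fun _ => by simp⟩
  · calc ((z i - w i)⁻¹ • (X i - C (w i))).totalDegree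
        ≤ (X i - C (w i) : MvPolynomial (Fin s) ℝ).totalDegree := totalDegree_smul_le _ _
      _ ≤ (X i : MvPolynomial (Fin s) ℝ).totalDegree := totalDegree_sub_C_le _ _
      _ = 1 := totalDegree_X i
  · have : z i - w i ≠ 0 := sub_ne_zero.mpr hi.symm
    simp [this]

theorem exists_totalDegree_le_card_evalOn_eq_single (S : Set (Fin s → ℝ)) [Fintype S] (z : S) :
    ∃ p : MvPolynomial (Fin s) ℝ, p.totalDegree ≤ Fintype.card S ∧
      evalOn S p = Pi.single z 1 := by
  choose q hq_deg hq_z hq_w using fun w : S => exists_totalDegree_le_one_separating z.1 w.1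
  refine ⟨∏ w ∈ Finset.univ.erase z, q w, ?_, ?_⟩
  · calc (∏ w ∈ Finset.univ.erase z, q w).totalDegree
        ≤ ∑ w ∈ Finset.univ.erase z, (q w).totalDegree := totalDegree_finsetProd _ _
      _ ≤ ∑ _w ∈ Finset.univ.erase z, 1 := Finset.sum_le_sum fun w _ => hq_deg w
      _ ≤ Fintype.card S := by simp
  · ext w
    rw [evalOn_apply, map_prod]
    by_cases hwz : w = z
    · subst hwz
      simp [hq_z]
    · rw [Pi.single_eq_of_ne hwz]
      exact Finset.prod_eq_zero (Finset.mem_erase.mpr ⟨hwz, Finset.mem_univ _⟩)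
        (hq_w w (Subtype.coe_injective.ne hwz))

theorem map_evalOn_restrictTotalDegree_card (S : Set (Fin s → ℝ)) [Fintype S] :
    (restrictTotalDegree (Fin s) ℝ (Fintype.card S)).map (evalOn S) = ⊤ := by
  rw [eq_top_iff, ← (Pi.basisFun ℝ S).span_eq, Submodule.span_le]
  rintro _ ⟨z, rfl⟩
  obtain ⟨p, hp_deg, hp_eval⟩ := exists_totalDegree_le_card_evalOn_eq_single S z
  exact ⟨p, (mem_restrictTotalDegree _ _ _).2 hp_deg, by rw [hp_eval, Pi.basisFun_apply]⟩

end MvPolynomial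

section

open MvPolynomial

variable {s : ℕ}

theorem exists_isMinDegInterpSpace (S : Set (Fin s → ℝ)) [Fintype S] :
    ∃ L, IsMinDegInterpSpace S L := by
  obtain ⟨σ, hσ_eval, hσ_deg⟩ := (evalOn S).exists_lift_of_monotone_of_map_eq_top
    restrictTotalDegree_monotone (map_evalOn_restrictTotalDegree_card S)
  refine ⟨LinearMap.range σ, fun f => ⟨σ (evalOn S f), ⟨LinearMap.mem_range_self σ _,
    evalOn_eq_evalOn_iff.1 (hσ_eval _)⟩, ?_⟩, ?_⟩
  · rintro _ ⟨⟨y, rfl⟩, hy⟩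
    rw [← evalOn_eq_evalOn_iff.2 hy, hσ_eval]
  · rintro f _ ⟨y, rfl⟩ hy
    have hyf : y = evalOn S f := (hσ_eval y).symm.trans (evalOn_eq_evalOn_iff.2 hy)
    refine (mem_restrictTotalDegree _ _ _).1 (hσ_deg _ y ?_)
    exact hyf ▸ ⟨f, (mem_restrictTotalDegree _ _ _).2 le_rfl, rfl⟩

namespace IsMinDegInterpSpace

variable {S S' : Set (Fin s → ℝ)} {L M : Submodule ℝ (MvPolynomial (Fin s) ℝ)}

theorem totalDegree_le_card [Fintype S] (hL : IsMinDegInterpSpace S L)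
    {g : MvPolynomial (Fin s) ℝ} (hg : g ∈ L) : g.totalDegree ≤ Fintype.card S := by
  obtain ⟨f, hf_deg, hf_eval⟩ : evalOn S g ∈
      (restrictTotalDegree (Fin s) ℝ (Fintype.card S)).map (evalOn S) := by
    rw [map_evalOn_restrictTotalDegree_card]; trivial
  exact (hL.2 f g hg (evalOn_eq_evalOn_iff.1 hf_eval.symm)).trans
    ((mem_restrictTotalDegree _ _ _).1 hf_deg)

theorem degSup_le_card [Fintype S] (hL : IsMinDegInterpSpace S L) :
    degSup L ≤ Fintype.card S :=
  csSup_le' fun _ ⟨_, hg, hdeg⟩ => hdeg ▸ hL.totalDegree_le_card hg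

theorem le_degSup [Fintype S] (hL : IsMinDegInterpSpace S L) {g : MvPolynomial (Fin s) ℝ}
    (hg : g ∈ L) : g.totalDegree ≤ degSup L :=
  le_csSup ⟨Fintype.card S, fun _ ⟨_, hg, hdeg⟩ => hdeg ▸ hL.totalDegree_le_card hg⟩ ⟨g, hg, rfl⟩

theorem degSup_le_mu [Fintype S] (hL : IsMinDegInterpSpace S L) : degSup L ≤ mu S :=
  le_csSup ⟨Fintype.card S, fun _ ⟨_, hM, hdeg⟩ => hdeg ▸ degSup_le_card hM⟩ ⟨L, hL, rfl⟩

theorem degSup_le_degSup_of_subset [Fintype S] (hM : IsMinDegInterpSpace S' M)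
    (hL : IsMinDegInterpSpace S L) (hsub : S' ⊆ S) : degSup M ≤ degSup L := by
  refine csSup_le' fun _ ⟨g, hg, hdeg⟩ => hdeg ▸ ?_
  obtain ⟨gL, ⟨hgL, hgL_eval⟩, -⟩ := hL.1 g
  exact (hM.2 gL g hg fun z hz => (hgL_eval z (hsub hz)).symm).trans (hL.le_degSup hgL)

end IsMinDegInterpSpace

end

/-- **Monotonicity of the minimal interpolation degree.** -/
theorem mu_mono {s : ℕ} (S' S : Set (Fin s → ℝ)) (hS : S.Finite) (hsub : S' ⊆ S) :
    mu S' ≤ mu S := by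
  have := hS.fintype
  obtain ⟨L, hL⟩ := exists_isMinDegInterpSpace S
  exact csSup_le' fun _ ⟨M, hM, hdeg⟩ =>
    hdeg ▸ (hM.degSup_le_degSup_of_subset hL hsub).trans hL.degSup_le_mu
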